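/- arXiv:2406.03006 — 2 statements merged into one kernel-verified Lean document; each statement's English description precedes it below -/
import Mathlib

section
/- Let Q > 1, q = (√Q − 1)/(√Q + 1), and ζ = 1 − q. Then the vector x̂ = C·∑_{j=0}^{k} q^{j+1} v_j (for orthonormal vectors v_0,…,v_k and constant C) satisfies the tridiagonal optimality system: 2((Q+1)/(Q−1))⟨x̂,v_0⟩ − ⟨x̂,v_1⟩ = C; ⟨x̂,v_{j−1}⟩ − 2((Q+1)/(Q−1))⟨x̂,v_j⟩ + ⟨x̂,v_{j+1}⟩ = 0 for 1 ≤ j ≤ k−1; and (1 + ζ + 4/(Q−1))⟨x̂,v_k⟩ − ⟨x̂,v_{k−1}⟩ = 0. -/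
open RealInnerProductSpace

theorem stmt_7 (d k : ℕ) (hk : 1 ≤ k) (Q C : ℝ) (hQ : 1 < Q)
    (q ζ : ℝ) (hq : q = (Real.sqrt Q - 1)/(Real.sqrt Q + 1)) (hζ : ζ = 1 - q)
    (v : Fin (k+1) → EuclideanSpace ℝ (Fin d)) (hv : Orthonormal ℝ v)
    (xhat : EuclideanSpace ℝ (Fin d))
    (hx : xhat = C • ∑ j : Fin (k+1), q^((j:ℕ)+1) • v j) :
    (2*((Q+1)/(Q-1)) * ⟪xhat, v ⟨0, by omega⟩⟫ - ⟪xhat, v ⟨1, by omega⟩⟫ = C) ∧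
    (∀ (j : ℕ) (hj1 : 1 ≤ j) (hj2 : j ≤ k - 1),
      ⟪xhat, v ⟨j-1, by omega⟩⟫ - 2*((Q+1)/(Q-1)) * ⟪xhat, v ⟨j, by omega⟩⟫
        + ⟪xhat, v ⟨j+1, by omega⟩⟫ = 0) ∧
    ((1 + ζ + 4/(Q-1)) * ⟪xhat, v ⟨k, by omega⟩⟫ - ⟪xhat, v ⟨k-1, by omega⟩⟫ = 0) := by
  have key : ∀ i : Fin (k+1), ⟪xhat, v i⟫ = C * q^((i:ℕ)+1) := by
    intro i
    rw [hx, inner_smul_left]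
    rw [hv.inner_left_fintype (fun j : Fin (k+1) => q^((j:ℕ)+1)) i]
    simp
  set s := Real.sqrt Q with hs
  have hs1 : 1 < s := by
    rw [hs]
    nlinarith [Real.sq_sqrt (by linarith : (0:ℝ) ≤ Q), Real.sqrt_nonneg Q]
  have hsQ : s^2 = Q := Real.sq_sqrt (by linarith)
  have h1 : s + 1 ≠ 0 := by nlinarith
  have hQ1 : Q - 1 ≠ 0 := by nlinarith
  have h2 : s^2 - 1 ≠ 0 := by nlinarith
  have hKq : 2*((Q+1)/(Q-1)) * q = 1 + q^2 := by
    rw [hq, ← hsQ]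
    field_simp
    ring
  refine ⟨?_, ?_, ?_⟩
  · rw [key, key]
    simp only [pow_succ, pow_zero, pow_one, one_mul]
    linear_combination C * hKq
  · intro j hj1 hj2
    rw [key, key, key]
    simp only
    have hj : j - 1 + 1 = j := by omega
    rw [hj]
    have : q ^ (j+1+1) = q^j * q^2 := by ring
    rw [this]
    have : q ^ (j+1) = q^j * q := by ring
    rw [this]
    linear_combination (-(C*q^j)) * hKq
  · rw [key, key]
    simp only
    have hj : k - 1 + 1 = k := by omega
    rw [hj]
    have hlast : (1 + ζ + 4/(Q-1)) * q = 1 := by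
      rw [hζ, hq, ← hsQ]
      have hsm : s - 1 ≠ 0 := by nlinarith
      have : s^2 - 1 = (s-1)*(s+1) := by ring
      rw [this]
      field_simp
      ring
    have : q ^ (k+1) = q^k * q := by ring
    rw [this]
    linear_combination (C*q^k) * hlast
end

section
/- In the strong weighted adversary bound applied to the multi-chain problem on n strings of k bits each with prefix-verification queries, using weights w(x,y) = 1 iff Hamming distance d(x,y) = 1, one has μ(x) = nk for all inputs x, and ν(x,q) ≤ k for all x and queries q; hence the adversary ratio min √(μ(x)μ(y)/(ν(x,q)ν(y,q))) over pairs with w(x,y) > 0 and ξ(x,q) ≠ ξ(y,q) equals n√k. -/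
/-
Every input has exactly `n * k` Hamming neighbours. The answer to a query `(i, t, s)` depends only
on the `t` bits of row `i` that `s` constrains, so `ν(x, q)` is the sensitivity of the test
"these bits equal `s`" at `x`: it is `t` when the test passes (each of those bits breaks it) and at
most `1` when it fails (only the unique mismatched bit, if there is one, can repair it). Two
neighbours with different answers therefore have `ν(x, q) ν(y, q) ≤ t ≤ k`, giving the bound
`n √k`, and the all-zero input together with its flip at `(0, 0)` and the query asking for the full
all-zero row attains it.
-/

open Classical

/-- A prefix-verification query for the multi-chain problem: row `i`,
prefix length `t` with `1 ≤ t ≤ k`, and a candidate prefix `s`. -/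
structure MCQuery (n k : ℕ) where
  i : Fin n
  t : ℕ
  ht1 : 1 ≤ t
  ht2 : t ≤ k
  s : Fin t → Bool

/-- The query answer: `s` is a prefix of row `i` of `x`. -/
def mcXi {n k : ℕ} (x : Fin n → Fin k → Bool) (q : MCQuery n k) : Prop :=
  ∀ j : Fin q.t, x q.i ⟨j, lt_of_lt_of_le j.isLt q.ht2⟩ = q.s j

/-- Hamming distance between inputs. -/
def mcHam {n k : ℕ} (x y : Fin n → Fin k → Bool) : ℕ :=
  (Finset.univ.filter (fun p : Fin n × Fin k => x p.1 p.2 ≠ y p.1 p.2)).card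

noncomputable def mcW {n k : ℕ} (x y : Fin n → Fin k → Bool) : ℕ :=
  if mcHam x y = 1 then 1 else 0

noncomputable def mcW' {n k : ℕ} (x y : Fin n → Fin k → Bool) (q : MCQuery n k) : ℕ :=
  if mcHam x y = 1 ∧ ¬(mcXi x q ↔ mcXi y q) then 1 else 0

noncomputable def mcMu {n k : ℕ} (x : Fin n → Fin k → Bool) : ℕ :=
  ∑ y : Fin n → Fin k → Bool, mcW x y

noncomputable def mcNu {n k : ℕ} (x : Fin n → Fin k → Bool) (q : MCQuery n k) : ℕ :=
  ∑ y : Fin n → Fin k → Bool, mcW' x y q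

open Finset Function

section BitFlip

variable {ι : Type*} [DecidableEq ι]

def bitFlip (x : ι → Bool) (i : ι) : ι → Bool :=
  update x i (!x i)

lemma bitFlip_apply_ne_iff {x : ι → Bool} {i a : ι} : bitFlip x i a ≠ x a ↔ a = i := by
  by_cases h : a = i
  · subst h; simp [bitFlip]
  · simp [bitFlip, h]

lemma bitFlip_injective (x : ι → Bool) : Injective (bitFlip x) := fun _ _ h =>
  bitFlip_apply_ne_iff.1 (h ▸ bitFlip_apply_ne_iff.2 rfl)

variable [Fintype ι]

lemma hammingDist_bitFlip (x : ι → Bool) (i : ι) : hammingDist x (bitFlip x i) = 1 := by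
  rw [hammingDist, card_eq_one]
  refine ⟨i, ext fun a => ?_⟩
  simpa only [mem_filter, mem_univ, true_and, mem_singleton] using
    ne_comm.trans bitFlip_apply_ne_iff

lemma hammingDist_eq_one_iff {x y : ι → Bool} : hammingDist x y = 1 ↔ ∃ i, y = bitFlip x i := by
  refine ⟨fun h => ?_, fun ⟨i, hy⟩ => hy ▸ hammingDist_bitFlip x i⟩
  obtain ⟨i, hi⟩ := card_eq_one.1 h
  have hdiff : ∀ a, x a ≠ y a ↔ a = i := fun a => by simpa using congrArg (a ∈ ·) hi
  refine ⟨i, funext fun a => ?_⟩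
  by_cases ha : a = i
  · subst ha; simpa [bitFlip] using Bool.eq_not_of_ne ((hdiff a).2 rfl).symm
  · simpa [bitFlip, ha, eq_comm] using (hdiff a).not.2 ha

lemma card_filter_hammingDist_eq_one (x : ι → Bool) (Q : (ι → Bool) → Prop) [DecidablePred Q] :
    #{y | hammingDist x y = 1 ∧ Q y} = #{i | Q (bitFlip x i)} := by
  rw [← card_image_of_injective _ (bitFlip_injective x)]
  congr 1
  ext y
  simp only [mem_filter, mem_univ, true_and, mem_image, hammingDist_eq_one_iff]
  constructor
  · rintro ⟨⟨i, rfl⟩, hQ⟩; exact ⟨i, hQ, rfl⟩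
  · rintro ⟨i, hQ, rfl⟩; exact ⟨⟨i, rfl⟩, hQ⟩

lemma card_hammingDist_eq_one (x : ι → Bool) : #{y | hammingDist x y = 1} = Fintype.card ι := by
  simpa using card_filter_hammingDist_eq_one x (fun _ => True)

end BitFlip

section Sensitivity

variable {ι J : Type*} [DecidableEq ι]

lemma bitFlip_comp_eq_iff (x : ι → Bool) (e : J ↪ ι) (i : ι) :
    bitFlip x i ∘ e = x ∘ e ↔ i ∉ Set.range e := by
  simp only [funext_iff, comp_apply, Set.mem_range, not_exists]
  exact forall_congr' fun j => not_iff_not.1 (by simpa using bitFlip_apply_ne_iff)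

lemma bitFlip_comp_ne {e : J ↪ ι} {s : J → Bool} {x : ι → Bool} (hx : x ∘ e = s) (j : J) :
    bitFlip x (e j) ∘ e ≠ s := by
  rw [← hx, Ne, bitFlip_comp_eq_iff, not_not]
  exact ⟨j, rfl⟩

variable [Fintype ι]

noncomputable def sensitivity (P : (ι → Bool) → Prop) (x : ι → Bool) : ℕ :=
  #{i | ¬(P x ↔ P (bitFlip x i))}

lemma one_le_sensitivity {P : (ι → Bool) → Prop} {x y : ι → Bool} (hxy : hammingDist x y = 1)
    (h : ¬(P x ↔ P y)) : 1 ≤ sensitivity P x := by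
  obtain ⟨i, rfl⟩ := hammingDist_eq_one_iff.1 hxy
  exact card_pos.2 ⟨i, by simpa using h⟩

variable [Fintype J]

lemma sensitivity_comp_le_card (R : (J → Bool) → Prop) (e : J ↪ ι) (x : ι → Bool) :
    sensitivity (fun y => R (y ∘ e)) x ≤ Fintype.card J := by
  have hsub : ({i | ¬(R (x ∘ e) ↔ R (bitFlip x i ∘ e))} : Finset ι) ⊆ univ.map e := by
    intro i hi
    by_contra hie
    have hflip : bitFlip x i ∘ e = x ∘ e := (bitFlip_comp_eq_iff x e i).2 (by simpa using hie)
    simp [hflip] at hi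
  simpa [sensitivity] using card_le_card hsub

lemma sensitivity_comp_eq_of_comp_eq {e : J ↪ ι} {s : J → Bool} {x : ι → Bool}
    (hx : x ∘ e = s) :
    sensitivity (· ∘ e = s) x = Fintype.card J := by
  subst hx
  rw [sensitivity, ← card_univ, ← card_map e]
  congr 1
  ext i
  simp [bitFlip_comp_eq_iff]

lemma sensitivity_comp_eq_le_one {e : J ↪ ι} {s : J → Bool} {x : ι → Bool} (hx : x ∘ e ≠ s) :
    sensitivity (· ∘ e = s) x ≤ 1 := by
  obtain ⟨j, hj⟩ : ∃ j, x (e j) ≠ s j := by simpa [funext_iff] using hx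
  have hflip : ∀ i, bitFlip x i ∘ e = s → i = e j := fun i hi =>
    (bitFlip_apply_ne_iff.1 (by simpa [← hi] using hj.symm)).symm
  refine card_le_one.2 fun i hi i' hi' => ?_
  simp only [mem_filter, mem_univ, true_and, iff_false_left hx, not_not] at hi hi'
  rw [hflip i hi, hflip i' hi']

lemma sensitivity_mul_sensitivity_le {e : J ↪ ι} {s : J → Bool} {x y : ι → Bool}
    (h : ¬(x ∘ e = s ↔ y ∘ e = s)) :
    sensitivity (· ∘ e = s) x * sensitivity (· ∘ e = s) y ≤ Fintype.card J := by
  by_cases hx : x ∘ e = s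
  · have hy : y ∘ e ≠ s := fun hy => h (iff_of_true hx hy)
    simpa using
      Nat.mul_le_mul (sensitivity_comp_le_card (· = s) e x) (sensitivity_comp_eq_le_one hy)
  · simpa using
      Nat.mul_le_mul (sensitivity_comp_eq_le_one hx) (sensitivity_comp_le_card (· = s) e y)

lemma sensitivity_bitFlip_comp_eq {e : J ↪ ι} {s : J → Bool} {x : ι → Bool} (hx : x ∘ e = s)
    (j : J) : sensitivity (· ∘ e = s) (bitFlip x (e j)) = 1 := by
  refine le_antisymm (sensitivity_comp_eq_le_one (bitFlip_comp_ne hx j))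
    (one_le_sensitivity (y := x) ?_ ?_)
  · rw [hammingDist_comm, hammingDist_bitFlip]
  · simpa [hx] using bitFlip_comp_ne hx j

end Sensitivity

section MultiChain

variable {n k : ℕ}

def MCQuery.prefixPositions (q : MCQuery n k) : Fin q.t ↪ Fin n × Fin k :=
  ⟨fun j => (q.i, Fin.castLE q.ht2 j),
    fun _ _ h => Fin.castLE_injective q.ht2 (congrArg Prod.snd h)⟩

lemma mcXi_iff (x : Fin n → Fin k → Bool) (q : MCQuery n k) :
    mcXi x q ↔ uncurry x ∘ q.prefixPositions = q.s := by
  rw [funext_iff]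
  rfl

lemma mcHam_eq_hammingDist (x y : Fin n → Fin k → Bool) :
    mcHam x y = hammingDist (uncurry x) (uncurry y) :=
  rfl

lemma mcMu_eq (x : Fin n → Fin k → Bool) : mcMu x = n * k := by
  rw [mcMu, ← (Equiv.curry _ _ _).sum_comp]
  simp only [mcW, mcHam_eq_hammingDist, Equiv.curry_apply, uncurry_curry]
  rw [sum_boole, Nat.cast_id, card_hammingDist_eq_one]
  simp

lemma mcNu_eq_sensitivity (x : Fin n → Fin k → Bool) (q : MCQuery n k) :
    mcNu x q = sensitivity (· ∘ q.prefixPositions = q.s) (uncurry x) := by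
  rw [mcNu, ← (Equiv.curry _ _ _).sum_comp]
  simp only [mcW', mcHam_eq_hammingDist, mcXi_iff, Equiv.curry_apply, uncurry_curry]
  rw [sum_boole, Nat.cast_id, card_filter_hammingDist_eq_one, sensitivity]
  -- the two filters differ only in their decidability instances
  congr

lemma mcW_pos_iff {x y : Fin n → Fin k → Bool} : 0 < mcW x y ↔ mcHam x y = 1 := by
  unfold mcW
  split_ifs with h <;> simp [h]

lemma mcNu_le (x : Fin n → Fin k → Bool) (q : MCQuery n k) : mcNu x q ≤ k := by
  rw [mcNu_eq_sensitivity]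
  exact ((sensitivity_comp_le_card (· = q.s) _ _).trans_eq (Fintype.card_fin _)).trans q.ht2

lemma mcNu_mul_mcNu_le {x y : Fin n → Fin k → Bool} {q : MCQuery n k}
    (h : ¬(mcXi x q ↔ mcXi y q)) : mcNu x q * mcNu y q ≤ k := by
  rw [mcXi_iff, mcXi_iff] at h
  rw [mcNu_eq_sensitivity, mcNu_eq_sensitivity]
  exact ((sensitivity_mul_sensitivity_le h).trans_eq (Fintype.card_fin _)).trans q.ht2

lemma mcNu_mul_mcNu_pos {x y : Fin n → Fin k → Bool} {q : MCQuery n k} (hxy : mcHam x y = 1)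
    (h : ¬(mcXi x q ↔ mcXi y q)) : 0 < mcNu x q * mcNu y q := by
  rw [mcXi_iff, mcXi_iff] at h
  rw [mcHam_eq_hammingDist] at hxy
  rw [mcNu_eq_sensitivity, mcNu_eq_sensitivity]
  exact Nat.mul_pos (one_le_sensitivity hxy h)
    (one_le_sensitivity (by rwa [hammingDist_comm]) (mt Iff.symm h))

lemma exists_mcNu_eq_card_and_mcNu_eq_one (hn : 1 ≤ n) (hk : 1 ≤ k) :
    ∃ (x y : Fin n → Fin k → Bool) (q : MCQuery n k),
      mcHam x y = 1 ∧ ¬(mcXi x q ↔ mcXi y q) ∧ mcNu x q = k ∧ mcNu y q = 1 := by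
  let q : MCQuery n k := ⟨⟨0, hn⟩, k, hk, le_rfl, fun _ => false⟩
  let x : Fin n × Fin k → Bool := fun _ => false
  have hx : x ∘ q.prefixPositions = q.s := rfl
  let j : Fin q.t := ⟨0, hk⟩
  refine ⟨curry x, curry (bitFlip x (q.prefixPositions j)), q, ?_, ?_, ?_, ?_⟩
  · rw [mcHam_eq_hammingDist, uncurry_curry, uncurry_curry, hammingDist_bitFlip]
  · rw [mcXi_iff, mcXi_iff, uncurry_curry, uncurry_curry, hx]
    simpa using bitFlip_comp_ne hx j
  · rw [mcNu_eq_sensitivity, uncurry_curry, sensitivity_comp_eq_of_comp_eq hx, Fintype.card_fin]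
  · rw [mcNu_eq_sensitivity, uncurry_curry, sensitivity_bitFlip_comp_eq hx]

end MultiChain

lemma sqrt_mul_self_div_self {a b : ℝ} (ha : 0 ≤ a) (hb : 0 < b) :
    √(a * b * (a * b) / b) = a * √b := by
  rw [show a * b * (a * b) / b = a ^ 2 * b by field_simp, Real.sqrt_mul (sq_nonneg a),
    Real.sqrt_sq ha]

lemma mul_sqrt_le_sqrt_mul_self_div {a b c : ℝ} (ha : 0 ≤ a) (hc : 0 < c) (hcb : c ≤ b) :
    a * √b ≤ √(a * b * (a * b) / c) := by
  rw [← sqrt_mul_self_div_self ha (hc.trans_le hcb)]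
  gcongr
  exact mul_self_nonneg _

theorem stmt_14 (n k : ℕ) (hn : 1 ≤ n) (hk : 1 ≤ k) :
    (∀ x : Fin n → Fin k → Bool, mcMu x = n * k) ∧
    (∀ (x : Fin n → Fin k → Bool) (q : MCQuery n k), mcNu x q ≤ k) ∧
    (∀ (x y : Fin n → Fin k → Bool) (q : MCQuery n k),
      0 < mcW x y → ¬(mcXi x q ↔ mcXi y q) →
      (n : ℝ) * Real.sqrt k ≤
        Real.sqrt (((mcMu x : ℝ) * (mcMu y : ℝ)) / ((mcNu x q : ℝ) * (mcNu y q : ℝ)))) ∧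
    (∃ (x y : Fin n → Fin k → Bool) (q : MCQuery n k),
      0 < mcW x y ∧ ¬(mcXi x q ↔ mcXi y q) ∧
      Real.sqrt (((mcMu x : ℝ) * (mcMu y : ℝ)) / ((mcNu x q : ℝ) * (mcNu y q : ℝ)))
        = (n : ℝ) * Real.sqrt k) := by
  refine ⟨mcMu_eq, mcNu_le, fun x y q hw hxy => ?_, ?_⟩
  · have hham : mcHam x y = 1 := mcW_pos_iff.1 hw
    rw [mcMu_eq, mcMu_eq, Nat.cast_mul, ← Nat.cast_mul (mcNu x q)]
    exact mul_sqrt_le_sqrt_mul_self_div n.cast_nonneg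
      (by exact_mod_cast mcNu_mul_mcNu_pos hham hxy) (by exact_mod_cast mcNu_mul_mcNu_le hxy)
  · obtain ⟨x, y, q, hham, hxy, hνx, hνy⟩ := exists_mcNu_eq_card_and_mcNu_eq_one hn hk
    refine ⟨x, y, q, mcW_pos_iff.2 hham, hxy, ?_⟩
    rw [mcMu_eq, mcMu_eq, hνx, hνy, Nat.cast_mul, Nat.cast_one, mul_one]
    exact sqrt_mul_self_div_self n.cast_nonneg (by exact_mod_cast hk)
end
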